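/- For every ε > 0 there exists n₀ such that for every integer n ≥ n₀, every graph G on n vertices with I(Net, G) = N(n), and every vertex v of G, the number of 6-element vertex subsets S of G with v ∈ S and G[S] isomorphic to the net is at least (24/1555 − ε)·C(n,5). -/

import Mathlib

/-!
In the iterated blow-up of the net (six parts joined as in the net, each part again an iterated
blow-up on a sixth of the vertices) every transversal of the six parts induces a net, which gives
`N(n) ≥ (n - 6)^6 / 46650`, so that `6 N(n) / n ≥ (24/1555 - o(1)) C(n,5)`.

In an extremal graph `G`, replacing `v` by a non-adjacent twin of `u` keeps the nets avoiding `v`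
and adds, for every net through `u` but not `v`, its image under the swap of `u` and `v`; by
extremality the nets through `u` are therefore at most the nets through `v` plus the `O(n^4)` nets
through both. Choosing `u` on at
least the average number `6 N(n) / n` of nets gives the bound for every `v`.
-/

open SimpleGraph

/-- Number of vertex subsets of `G` whose induced subgraph is isomorphic to `H`. -/
noncomputable def inducedCount {α β : Type*} [Fintype α] [Fintype β]
    (H : SimpleGraph α) (G : SimpleGraph β) : ℕ :=
  Set.ncard {S : Finset β | Nonempty (H ≃g (G.induce (S : Set β)))}

/-- Maximum of `inducedCount H G` over all graphs `G` on `n` vertices. -/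
noncomputable def maxCount {α : Type*} [Fintype α] (H : SimpleGraph α) (n : ℕ) : ℕ :=
  sSup {m | ∃ G : SimpleGraph (Fin n), inducedCount H G = m}

/-- The net graph: a triangle on `{3,4,5}` with pendant vertices `0,1,2`
attached to `3,4,5` respectively (0-indexed version of vertices 1..6). -/
def netGraph : SimpleGraph (Fin 6) :=
  SimpleGraph.fromRel (fun a b =>
    (a = 3 ∧ b = 4) ∨ (a = 4 ∧ b = 5) ∨ (a = 3 ∧ b = 5) ∨
    (a = 0 ∧ b = 3) ∨ (a = 1 ∧ b = 4) ∨ (a = 2 ∧ b = 5))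

/-- `N(n)`: the maximum number of induced copies of the net among graphs on `n` vertices. -/
noncomputable def netMax (n : ℕ) : ℕ := maxCount netGraph n

open Finset

section InducedCopies

variable {α β γ : Type*} [Fintype β] [Fintype γ]

open Classical in
noncomputable def inducedCopies (H : SimpleGraph α) (G : SimpleGraph β) : Finset (Finset β) :=
  univ.filter fun S => Nonempty (H ≃g G.induce (S : Set β))

variable {H : SimpleGraph α} {G : SimpleGraph β}

@[simp]
lemma mem_inducedCopies {S : Finset β} :
    S ∈ inducedCopies H G ↔ Nonempty (H ≃g G.induce (S : Set β)) := by
  simp [inducedCopies]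

lemma inducedCount_eq_card_inducedCopies [Fintype α] :
    inducedCount H G = #(inducedCopies H G) := by
  rw [inducedCount, ← Set.ncard_coe_finset]
  congr
  ext
  simp

lemma card_eq_of_mem_inducedCopies [Fintype α] {S : Finset β} (hS : S ∈ inducedCopies H G) :
    #S = Fintype.card α := by
  obtain ⟨e⟩ := mem_inducedCopies.1 hS
  simpa using (Fintype.card_congr e.toEquiv).symm

lemma univ_mem_inducedCopies_self [Fintype α] : (univ : Finset α) ∈ inducedCopies H H :=
  mem_inducedCopies.2 ⟨by rw [coe_univ]; exact (induceUnivIso H).symm⟩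

lemma image_mem_inducedCopies [DecidableEq γ] {G' : SimpleGraph γ} {S : Finset β} {f : β → γ}
    (hf : Set.InjOn f S) (hadj : ∀ a ∈ S, ∀ b ∈ S, G'.Adj (f a) (f b) ↔ G.Adj a b)
    (hS : S ∈ inducedCopies H G) : S.image f ∈ inducedCopies H G' := by
  obtain ⟨e⟩ := mem_inducedCopies.1 hS
  refine mem_inducedCopies.2 ⟨e.trans ?_⟩
  rw [coe_image]
  exact { toEquiv := Equiv.Set.imageOfInjOn f S hf
          map_rel_iff' := hadj _ (Subtype.prop _) _ (Subtype.prop _) }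

variable [DecidableEq β]

noncomputable def inducedCopiesAt (H : SimpleGraph α) (G : SimpleGraph β) (v : β) :
    Finset (Finset β) :=
  {S ∈ inducedCopies H G | v ∈ S}

lemma ncard_eq_card_inducedCopiesAt (v : β) :
    {S : Finset β | v ∈ S ∧ Nonempty (H ≃g G.induce (S : Set β))}.ncard =
      #(inducedCopiesAt H G v) := by
  rw [← Set.ncard_coe_finset]
  congr
  ext
  simp [inducedCopiesAt, and_comm]

lemma sum_card_inducedCopiesAt [Fintype α] :
    ∑ v, #(inducedCopiesAt H G v) = Fintype.card α * #(inducedCopies H G) := by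
  calc ∑ v, #(inducedCopiesAt H G v)
      = ∑ v, ∑ S ∈ inducedCopies H G, if v ∈ S then 1 else 0 := by
        simp only [inducedCopiesAt, card_filter]
    _ = ∑ S ∈ inducedCopies H G, #S := by
        rw [sum_comm]
        simp
    _ = Fintype.card α * #(inducedCopies H G) := by
        rw [sum_congr rfl fun S hS => card_eq_of_mem_inducedCopies hS, sum_const, smul_eq_mul,
          mul_comm]

lemma exists_card_mul_card_inducedCopies_le [Fintype α] [Nonempty β] :
    ∃ u, Fintype.card α * #(inducedCopies H G) ≤
      Fintype.card β * #(inducedCopiesAt H G u) := by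
  have hsum : ∑ _u : β, Fintype.card α * #(inducedCopies H G) =
      ∑ u, Fintype.card β * #(inducedCopiesAt H G u) := by
    rw [sum_const, card_univ, smul_eq_mul, ← mul_sum, sum_card_inducedCopiesAt]
  obtain ⟨u, -, hu⟩ := exists_le_of_sum_le univ_nonempty hsum.le
  exact ⟨u, hu⟩

end InducedCopies

namespace SimpleGraph

variable {β : Type*} [DecidableEq β] {G : SimpleGraph β}

lemma adj_replaceVertex_swap_iff {u v a b : β} (ha : a ≠ v) (hb : b ≠ v) :
    (G.replaceVertex u v).Adj (Equiv.swap u v a) (Equiv.swap u v b) ↔ G.Adj a b := by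
  have hswap : ∀ {x}, x ≠ u → x ≠ v → Equiv.swap u v x = x := Equiv.swap_apply_of_ne_of_ne
  by_cases hau : a = u <;> by_cases hbu : b = u
  · subst hau hbu
    simp
  · subst hau
    rw [Equiv.swap_apply_left, hswap hbu hb, adj_replaceVertex_iff_of_ne_right G a hb]
  · subst hbu
    rw [Equiv.swap_apply_left, hswap hau ha, adj_comm, adj_replaceVertex_iff_of_ne_right G b ha,
      adj_comm]
  · rw [hswap hau ha, hswap hbu hb, adj_replaceVertex_iff_of_ne G u ha hb]

end SimpleGraph

lemma Finset.card_le_choose_of_pair_subset {β : Type*} [Fintype β] [DecidableEq β]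
    {𝒜 : Finset (Finset β)} {k : ℕ} {u v : β} (huv : u ≠ v)
    (h𝒜 : ∀ S ∈ 𝒜, #S = k ∧ {u, v} ⊆ S) :
    #𝒜 ≤ (Fintype.card β).choose (k - 2) := by
  calc #𝒜 ≤ #((univ : Finset β).powersetCard (k - 2)) := by
        refine card_le_card_of_injOn (· \ {u, v}) (fun S hS => ?_) (fun S hS T hT hST => ?_)
        · obtain ⟨hk, huvS⟩ := h𝒜 S hS
          simp [card_sdiff_of_subset huvS, hk, card_pair huv]
        · rw [← sdiff_union_of_subset (h𝒜 S hS).2, ← sdiff_union_of_subset (h𝒜 T hT).2]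
          exact congrArg (· ∪ {u, v}) hST
    _ = (Fintype.card β).choose (k - 2) := by rw [card_powersetCard, card_univ]

section Cloning

variable {α β : Type*} [Fintype β] [DecidableEq β] {H : SimpleGraph α} {G : SimpleGraph β}

lemma card_add_card_le_card_inducedCopies_replaceVertex (u v : β) :
    #{S ∈ inducedCopies H G | v ∉ S} + #{S ∈ inducedCopies H G | u ∈ S ∧ v ∉ S} ≤
      #(inducedCopies H (G.replaceVertex u v)) := by
  set C' := inducedCopies H (G.replaceVertex u v)
  have hkeep : {S ∈ inducedCopies H G | v ∉ S} ⊆ {S ∈ C' | v ∉ S} := by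
    intro S hS
    rw [mem_filter] at hS ⊢
    have hv : ∀ a ∈ S, a ≠ v := fun a ha hav => hS.2 (hav ▸ ha)
    refine ⟨?_, hS.2⟩
    simpa only [image_id] using image_mem_inducedCopies (Set.injOn_id _)
      (fun a ha b hb => adj_replaceVertex_iff_of_ne G u (hv a ha) (hv b hb)) hS.1
  have hmove : {S ∈ inducedCopies H G | u ∈ S ∧ v ∉ S}.image (·.image (Equiv.swap u v)) ⊆
      {S ∈ C' | v ∈ S} := by
    intro _ hT
    obtain ⟨S, hS, rfl⟩ := mem_image.1 hT
    rw [mem_filter] at hS ⊢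
    obtain ⟨hS, hu, hv⟩ := hS
    have hv : ∀ a ∈ S, a ≠ v := fun a ha hav => hv (hav ▸ ha)
    refine ⟨image_mem_inducedCopies (Equiv.injective _).injOn
      (fun a ha b hb => G.adj_replaceVertex_swap_iff (hv a ha) (hv b hb)) hS,
      mem_image.2 ⟨u, hu, Equiv.swap_apply_left u v⟩⟩
  calc _ = #{S ∈ inducedCopies H G | v ∉ S} +
        #({S ∈ inducedCopies H G | u ∈ S ∧ v ∉ S}.image (·.image (Equiv.swap u v))) := by
        rw [card_image_of_injective _ (image_injective (Equiv.injective _))]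
    _ ≤ #{S ∈ C' | v ∉ S} + #{S ∈ C' | v ∈ S} :=
        add_le_add (card_le_card hkeep) (card_le_card hmove)
    _ = #C' := by rw [add_comm, card_filter_add_card_filter_not]

variable [Fintype α]

lemma card_inducedCopiesAt_le_add_of_forall_le
    (hG : ∀ G' : SimpleGraph β, inducedCount H G' ≤ inducedCount H G) (u v : β) :
    #(inducedCopiesAt H G u) ≤
      #(inducedCopiesAt H G v) + #{S ∈ inducedCopies H G | u ∈ S ∧ v ∈ S} := by
  have hclone := card_add_card_le_card_inducedCopies_replaceVertex (H := H) (G := G) u v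
  have hmax := hG (G.replaceVertex u v)
  rw [inducedCount_eq_card_inducedCopies, inducedCount_eq_card_inducedCopies] at hmax
  have hsplit := card_filter_add_card_filter_not (s := inducedCopies H G) (fun S => v ∈ S)
  have hsplitAt := card_filter_add_card_filter_not (s := inducedCopiesAt H G u) (fun S => v ∈ S)
  simp only [inducedCopiesAt, filter_filter] at hsplitAt ⊢
  omega

theorem card_mul_card_inducedCopies_le_of_forall_le
    (hG : ∀ G' : SimpleGraph β, inducedCount H G' ≤ inducedCount H G) (v : β) :
    Fintype.card α * #(inducedCopies H G) ≤
      Fintype.card β *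
        (#(inducedCopiesAt H G v) + (Fintype.card β).choose (Fintype.card α - 2)) := by
  have : Nonempty β := ⟨v⟩
  obtain ⟨u, hu⟩ := exists_card_mul_card_inducedCopies_le (H := H) (G := G)
  refine hu.trans (Nat.mul_le_mul_left _ ?_)
  rcases eq_or_ne u v with rfl | huv
  · exact Nat.le_add_right _ _
  refine (card_inducedCopiesAt_le_add_of_forall_le hG u v).trans (Nat.add_le_add_left ?_ _)
  refine card_le_choose_of_pair_subset huv fun S hS => ?_
  rw [mem_filter] at hS
  exact ⟨card_eq_of_mem_inducedCopies hS.1,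
    insert_subset hS.2.1 (singleton_subset_iff.2 hS.2.2)⟩

end Cloning

section IteratedBlowup

variable {k : ℕ} [NeZero k]

lemma Nat.mod_pow_succ_eq_mod_pow_succ_iff {x y j : ℕ} :
    x % k ^ (j + 1) = y % k ^ (j + 1) ↔ x % k = y % k ∧ x / k % k ^ j = y / k % k ^ j := by
  have hk : 0 < k := Nat.pos_of_neZero k
  rw [pow_succ', Nat.mod_mul, Nat.mod_mul]
  refine ⟨fun h => ?_, fun ⟨h₁, h₂⟩ => by rw [h₁, h₂]⟩
  have hmod := congrArg (· % k) h
  have hdiv := congrArg (· / k) h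
  simp only [Nat.add_mul_mod_self_left, Nat.mod_mod] at hmod
  simp only [Nat.add_mul_div_left _ _ hk, Nat.mod_div_self, zero_add] at hdiv
  exact ⟨hmod, hdiv⟩

/-- Two numbers are adjacent when, at the first base-`k` digit where they differ, their digits are
adjacent in `H`. -/
def iteratedBlowup (H : SimpleGraph (Fin k)) : SimpleGraph ℕ where
  Adj x y :=
    ∃ j, x % k ^ j = y % k ^ j ∧ H.Adj (Fin.ofNat k (x / k ^ j)) (Fin.ofNat k (y / k ^ j))
  symm := ⟨fun _ _ ⟨j, hj, hadj⟩ => ⟨j, hj.symm, hadj.symm⟩⟩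
  loopless := ⟨fun _ ⟨_, _, hadj⟩ => hadj.ne rfl⟩

variable {H : SimpleGraph (Fin k)}

lemma iteratedBlowup_adj_iff {x y : ℕ} :
    (iteratedBlowup H).Adj x y ↔ H.Adj (Fin.ofNat k x) (Fin.ofNat k y) ∨
      (x % k = y % k ∧ (iteratedBlowup H).Adj (x / k) (y / k)) := by
  simp only [iteratedBlowup]
  constructor
  · rintro ⟨_ | j, hj, hadj⟩
    · simpa using Or.inl hadj
    · rw [Nat.mod_pow_succ_eq_mod_pow_succ_iff] at hj
      rw [pow_succ', ← Nat.div_div_eq_div_mul, ← Nat.div_div_eq_div_mul] at hadj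
      exact Or.inr ⟨hj.1, j, hj.2, hadj⟩
  · rintro (hadj | ⟨hxy, j, hj, hadj⟩)
    · exact ⟨0, by simpa only [pow_zero, Nat.mod_one, Nat.div_one, true_and] using hadj⟩
    · refine ⟨j + 1, Nat.mod_pow_succ_eq_mod_pow_succ_iff.2 ⟨hxy, hj⟩, ?_⟩
      rwa [pow_succ', ← Nat.div_div_eq_div_mul, ← Nat.div_div_eq_div_mul]

lemma iteratedBlowup_adj_add_mul {i j : Fin k} {s t : ℕ} :
    (iteratedBlowup H).Adj (i + k * s) (j + k * t) ↔
      H.Adj i j ∨ (i = j ∧ (iteratedBlowup H).Adj s t) := by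
  have hk : 0 < k := Nat.pos_of_neZero k
  have hofNat (i : Fin k) (s : ℕ) : Fin.ofNat k (i + k * s) = i :=
    Fin.ext (by simp [Nat.mod_eq_of_lt i.isLt])
  rw [iteratedBlowup_adj_iff, hofNat, hofNat]
  simp [Nat.add_mul_div_left _ _ hk, Nat.mod_eq_of_lt i.isLt, Nat.mod_eq_of_lt j.isLt,
    Nat.div_eq_of_lt i.isLt, Nat.div_eq_of_lt j.isLt, Fin.val_inj]

variable (H) in
def blowupGraph (n : ℕ) : SimpleGraph (Fin n) :=
  (iteratedBlowup H).comap Fin.val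

variable (k) in
def blowupPos (n : ℕ) : Fin (n / k) × Fin k ↪ Fin n :=
  finProdFinEquiv.toEmbedding.trans (Fin.castLEEmb (Nat.div_mul_le_self n k))

end IteratedBlowup

section BlowupCount

variable {k : ℕ} {H : SimpleGraph (Fin k)} {n : ℕ}

@[simp]
lemma val_blowupPos (p : Fin (n / k) × Fin k) : (blowupPos k n p : ℕ) = p.2 + k * p.1 := rfl

lemma blowupGraph_adj_blowupPos [NeZero k] {p q : Fin (n / k) × Fin k} :
    (blowupGraph H n).Adj (blowupPos k n p) (blowupPos k n q) ↔
      H.Adj p.2 q.2 ∨ (p.2 = q.2 ∧ (blowupGraph H (n / k)).Adj p.1 q.1) := by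
  simp only [blowupGraph, comap_adj, val_blowupPos]
  exact iteratedBlowup_adj_add_mul

def blowupTransversal (t : Fin k → Fin (n / k)) : Finset (Fin n) :=
  univ.image fun i => blowupPos k n (t i, i)

def blowupPart (i : Fin k) (S : Finset (Fin (n / k))) : Finset (Fin n) :=
  S.image fun s => blowupPos k n (s, i)

lemma blowupPos_mem_blowupTransversal {t : Fin k → Fin (n / k)} (i : Fin k) :
    blowupPos k n (t i, i) ∈ blowupTransversal t :=
  mem_image_of_mem _ (mem_univ i)

lemma blowupPos_mem_blowupTransversal_iff {t : Fin k → Fin (n / k)} {s : Fin (n / k)}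
    {i : Fin k} :
    blowupPos k n (s, i) ∈ blowupTransversal t ↔ s = t i := by
  simp [blowupTransversal, eq_comm]

lemma blowupPos_mem_blowupPart_iff {S : Finset (Fin (n / k))} {s : Fin (n / k)} {i j : Fin k} :
    blowupPos k n (s, j) ∈ blowupPart i S ↔ j = i ∧ s ∈ S := by
  simp [blowupPart, and_comm, eq_comm]

lemma blowupTransversal_mem_inducedCopies [NeZero k] (t : Fin k → Fin (n / k)) :
    blowupTransversal t ∈ inducedCopies H (blowupGraph H n) := by
  refine image_mem_inducedCopies (fun a _ b _ h => congrArg Prod.snd ((blowupPos k n).injective h))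
    (fun a _ b _ => ?_) univ_mem_inducedCopies_self
  rw [blowupGraph_adj_blowupPos]
  exact or_iff_left fun ⟨hab, hadj⟩ => hadj.ne (congrArg t hab)

lemma blowupPart_mem_inducedCopies [NeZero k] (i : Fin k) {S : Finset (Fin (n / k))}
    (hS : S ∈ inducedCopies H (blowupGraph H (n / k))) :
    blowupPart i S ∈ inducedCopies H (blowupGraph H n) :=
  image_mem_inducedCopies (fun a _ b _ h => congrArg Prod.fst ((blowupPos k n).injective h))
    (fun a _ b _ => by simp [blowupGraph_adj_blowupPos]) hS

lemma blowupTransversal_injective : Function.Injective (blowupTransversal (k := k) (n := n)) :=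
  fun _ _ h => funext fun i =>
    blowupPos_mem_blowupTransversal_iff.1 (h ▸ blowupPos_mem_blowupTransversal i)

lemma blowupPart_injOn :
    Set.InjOn (fun p : Fin k × Finset (Fin (n / k)) => blowupPart p.1 p.2) {p | p.2.Nonempty} := by
  rintro ⟨i, S⟩ ⟨s, hs⟩ ⟨j, S'⟩ - (h : blowupPart i S = blowupPart j S')
  have hij : i = j :=
    (blowupPos_mem_blowupPart_iff.1 (h ▸ blowupPos_mem_blowupPart_iff.2 ⟨rfl, hs⟩)).1
  subst hij
  refine Prod.ext rfl (Finset.ext fun s => ?_)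
  simpa [blowupPos_mem_blowupPart_iff] using congrArg (blowupPos k n (s, i) ∈ ·) h

lemma blowupTransversal_ne_blowupPart (hk : 2 ≤ k) (t : Fin k → Fin (n / k)) (i : Fin k)
    (S : Finset (Fin (n / k))) : blowupTransversal t ≠ blowupPart i S := by
  have : Nontrivial (Fin k) := Fin.nontrivial_iff_two_le.2 hk
  obtain ⟨j, hji⟩ := exists_ne i
  intro h
  exact hji (blowupPos_mem_blowupPart_iff.1 (h ▸ blowupPos_mem_blowupTransversal j)).1

theorem card_inducedCopies_blowupGraph_ge [NeZero k] (hk : 2 ≤ k) (n : ℕ) :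
    (n / k) ^ k + k * #(inducedCopies H (blowupGraph H (n / k))) ≤
      #(inducedCopies H (blowupGraph H n)) := by
  set 𝒞 := inducedCopies H (blowupGraph H (n / k))
  set 𝒯 := univ.image (blowupTransversal (k := k) (n := n))
  set 𝒮 := (univ ×ˢ 𝒞).image fun p => blowupPart p.1 p.2
  have h𝒯 : #𝒯 = (n / k) ^ k := by
    rw [card_image_of_injective _ blowupTransversal_injective]
    simp
  have h𝒮 : #𝒮 = k * #𝒞 := by
    rw [card_image_of_injOn (blowupPart_injOn.mono fun p hp => ?_)]
    · simp
    · rw [mem_coe, mem_product] at hp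
      refine card_pos.1 ?_
      rw [card_eq_of_mem_inducedCopies hp.2, Fintype.card_fin]
      exact Nat.pos_of_neZero k
  have hdisj : Disjoint 𝒯 𝒮 := by
    simp only [𝒯, 𝒮, Finset.disjoint_left, mem_image]
    rintro _ ⟨t, -, rfl⟩ ⟨⟨i, S⟩, -, h⟩
    exact blowupTransversal_ne_blowupPart hk t i S h.symm
  have hsub : 𝒯 ∪ 𝒮 ⊆ inducedCopies H (blowupGraph H n) := by
    refine union_subset (fun _ hT => ?_) (fun _ hP => ?_)
    · obtain ⟨t, -, rfl⟩ := mem_image.1 hT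
      exact blowupTransversal_mem_inducedCopies t
    · obtain ⟨⟨i, S⟩, hS, rfl⟩ := mem_image.1 hP
      exact blowupPart_mem_inducedCopies i (mem_product.1 hS).2
  calc _ = #(𝒯 ∪ 𝒮) := by rw [card_union_of_disjoint hdisj, h𝒯, h𝒮]
    _ ≤ _ := card_le_card hsub

end BlowupCount

lemma six_mul_sub_one_pow_six_le {m : ℕ} (hm : 1 ≤ m) :
    (6 * m - 1) ^ 6 ≤ 46650 * m ^ 6 + 6 * (m - 6) ^ 6 := by
  rcases le_or_gt m 5 with hm5 | hm5
  · interval_cases m <;> norm_num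
  · obtain ⟨y, rfl⟩ : ∃ y, m = y + 6 := ⟨m - 6, by omega⟩
    rw [show 6 * (y + 6) - 1 = 6 * y + 35 by omega, Nat.add_sub_cancel]
    have hexpand : 46650 * (y + 6) ^ 6 + 6 * y ^ 6 =
        (6 * y + 35) ^ 6 + (46440 * y ^ 5 + 1377000 * y ^ 4 + 16308000 * y ^ 3 +
          96538500 * y ^ 2 + 285714900 * y + 338236775) := by ring
    rw [hexpand]
    exact Nat.le_add_right _ _

/-- `46650 = 6 ^ 6 - 6` makes `n ^ 6 / 46650` a solution of `f n = (n / 6) ^ 6 + 6 * f (n / 6)`. -/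
theorem sub_six_pow_six_le_card_inducedCopies_blowupGraph (H : SimpleGraph (Fin 6)) (n : ℕ) :
    (n - 6) ^ 6 ≤ 46650 * #(inducedCopies H (blowupGraph H n)) := by
  induction n using Nat.strong_induction_on with
  | _ n ih =>
    rcases le_or_gt n 6 with hn | hn
    · simp [Nat.sub_eq_zero_of_le hn]
    have hm : 1 ≤ n / 6 := by omega
    calc (n - 6) ^ 6 ≤ (6 * (n / 6) - 1) ^ 6 := Nat.pow_le_pow_left (by omega) 6
      _ ≤ 46650 * (n / 6) ^ 6 + 6 * (n / 6 - 6) ^ 6 := six_mul_sub_one_pow_six_le hm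
      _ ≤ 46650 * (n / 6) ^ 6 + 6 * (46650 * #(inducedCopies H (blowupGraph H (n / 6)))) := by
        gcongr
        exact ih _ (by omega)
      _ = 46650 * ((n / 6) ^ 6 + 6 * #(inducedCopies H (blowupGraph H (n / 6)))) := by ring
      _ ≤ 46650 * #(inducedCopies H (blowupGraph H n)) := by
        gcongr
        exact card_inducedCopies_blowupGraph_ge (by norm_num) n

lemma inducedCount_le_maxCount {α : Type*} [Fintype α] (H : SimpleGraph α) {n : ℕ}
    (G : SimpleGraph (Fin n)) : inducedCount H G ≤ maxCount H n :=
  le_csSup (Set.finite_range _).bddAbove ⟨G, rfl⟩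

lemma sub_six_pow_six_le_maxCount {H : SimpleGraph (Fin 6)} (n : ℕ) :
    (n - 6) ^ 6 ≤ 46650 * maxCount H n := by
  refine (sub_six_pow_six_le_card_inducedCopies_blowupGraph H n).trans (Nat.mul_le_mul_left _ ?_)
  rw [← inducedCount_eq_card_inducedCopies]
  exact inducedCount_le_maxCount H _

lemma pow_six_sub_le_sub_six_pow_six {x : ℝ} (hx : 6 ≤ x) :
    x ^ 6 - 36 * x ^ 5 ≤ (x - 6) ^ 6 := by
  have hy : 0 ≤ x - 6 := by linarith
  nlinarith [pow_nonneg hy 4, pow_nonneg hy 3, pow_nonneg hy 2]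

lemma pow_five_le_two_mul_sub_four_pow_five {x : ℝ} (hx : 50 ≤ x) :
    x ^ 5 ≤ 2 * (x - 4) ^ 5 := by
  have hy : 0 ≤ x - 50 := by linarith
  nlinarith [pow_nonneg hy 5, pow_nonneg hy 4, pow_nonneg hy 3, pow_nonneg hy 2]

lemma sub_mul_choose_five_le {n c N : ℕ} {ε : ℝ} (hn : 50 ≤ n) (hε : 24 ≤ ε * n)
    (hN : (n - 6) ^ 6 ≤ 46650 * N) (hc : 6 * N ≤ n * (c + n.choose 4)) :
    (24 / 1555 - ε) * (n.choose 5 : ℝ) ≤ c := by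
  have hx : (50 : ℝ) ≤ (n : ℝ) := by exact_mod_cast hn
  have hN' : ((n : ℝ) - 6) ^ 6 ≤ 46650 * N := by
    have := Nat.cast_le (α := ℝ).2 hN
    push_cast [Nat.cast_sub (by omega : 6 ≤ n)] at this
    exact this
  have hc' : 6 * (N : ℝ) ≤ (n : ℝ) * (c + n.choose 4) := by exact_mod_cast hc
  have hC4 : (n.choose 4 : ℝ) ≤ (n : ℝ) ^ 4 / 24 := by
    simpa [Nat.factorial] using Nat.choose_le_pow_div (α := ℝ) 4 n
  have hC5 : (n.choose 5 : ℝ) ≤ (n : ℝ) ^ 5 / 120 := by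
    simpa [Nat.factorial] using Nat.choose_le_pow_div (α := ℝ) 5 n
  have hC5' : ((n : ℝ) - 4) ^ 5 / 120 ≤ n.choose 5 := by
    have := Nat.pow_le_choose (α := ℝ) 5 n
    rwa [show n + 1 - 5 = n - 4 by omega, Nat.cast_sub (by omega : 4 ≤ n)] at this
  have hx0 : 0 ≤ (n : ℝ) := n.cast_nonneg
  -- `n c ≥ 6 N - n C(n,4) ≥ 6 (n - 6)^6 / 46650 - n^5 / 24`, while
  -- `n (24/1555) C(n,5) ≤ n^6 / 7775` and `n ε C(n,5) ≥ 24 C(n,5) ≥ n^5 / 10`.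
  have key : (n : ℝ) * ((24 / 1555 - ε) * n.choose 5) ≤ (n : ℝ) * c := by
    linarith [mul_le_mul_of_nonneg_left hC4 hx0, mul_le_mul_of_nonneg_left hC5 hx0,
      mul_le_mul_of_nonneg_right hε (Nat.cast_nonneg (n.choose 5)),
      pow_six_sub_le_sub_six_pow_six (by linarith : 6 ≤ (n : ℝ)),
      pow_five_le_two_mul_sub_four_pow_five hx]
  exact le_of_mul_le_mul_left key (by linarith)

theorem every_vertex_in_many_nets :
    ∀ ε : ℝ, 0 < ε → ∃ n₀ : ℕ, ∀ n : ℕ, n₀ ≤ n → ∀ G : SimpleGraph (Fin n),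
      inducedCount netGraph G = netMax n → ∀ v : Fin n,
        (24 / 1555 - ε) * (n.choose 5 : ℝ) ≤
          (Set.ncard {S : Finset (Fin n) |
            v ∈ S ∧ Nonempty (netGraph ≃g (G.induce (S : Set (Fin n))))} : ℝ) := by
  intro ε hε
  refine ⟨max 50 ⌈24 / ε⌉₊, fun n hn G hG v => ?_⟩
  have hεn : 24 ≤ ε * n := by
    have := (Nat.le_ceil (24 / ε)).trans (Nat.cast_le.2 (le_of_max_le_right hn))
    rwa [div_le_iff₀ hε, mul_comm] at this
  have hmax : ∀ G', inducedCount netGraph G' ≤ inducedCount netGraph G :=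
    fun G' => by rw [hG]; exact inducedCount_le_maxCount netGraph G'
  have hlower := sub_six_pow_six_le_maxCount (H := netGraph) n
  have hvertex := card_mul_card_inducedCopies_le_of_forall_le hmax v
  rw [Fintype.card_fin, Fintype.card_fin] at hvertex
  rw [← netMax, ← hG, inducedCount_eq_card_inducedCopies] at hlower
  rw [ncard_eq_card_inducedCopiesAt]
  exact sub_mul_choose_five_le (le_of_max_le_left hn) hεn hlower hvertex
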